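/- arXiv:1412.8207 — 3 statements merged into one kernel-verified Lean document; each statement's English description precedes it below -/
import Mathlib

section
/- Let Γ be a connected graph and let D, E ∈ ℝ^{Vert(Γ)} be zero-sum vectors. Then the Green's function g(Γ, ·; D, E), defined on the set of proper resistances ℝ_{>0}^{Ed(Γ)}, extends to a continuous function on ℝ_{≥0}^{Ed(Γ)}. -/
open Classical
open scoped BigOperators

/-- A graph: a finite set of vertices, a finite set of edges, and a map assigning to
each edge its unordered pair of endpoints (loops and parallel edges allowed). -/
structure RGraph where
  V : Type
  E : Type
  [fintV : Fintype V]
  [decV : DecidableEq V]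
  [fintE : Fintype E]
  [decE : DecidableEq E]
  ends : E → Sym2 V

attribute [instance] RGraph.fintV RGraph.decV RGraph.fintE RGraph.decE

namespace RGraph

variable (G : RGraph)

/-- The Laplacian of the resistive network `(G, μ)` applied to a voltage assignment `v`:
`(L v) i = Σ_j Σ_{edges e : i → j} (v i − v j) / μ e`. -/
noncomputable def lap (μ : G.E → ℝ) (v : G.V → ℝ) : G.V → ℝ := fun i =>
  ∑ j : G.V, ∑ e : G.E, if G.ends e = s(i, j) then (v i - v j) / μ e else 0

/-- `i` and `j` are joined by an edge belonging to `F`. -/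
def Adj (F : Set G.E) (i j : G.V) : Prop := ∃ e ∈ F, G.ends e = s(i, j)

/-- `i` and `j` lie in the same connected component of the subgraph `Γ|_F`
(the subgraph with all vertices of `Γ` and edge set `F`). -/
def Reach (F : Set G.E) (i j : G.V) : Prop := Relation.EqvGen (G.Adj F) i j

/-- The subgraph `Γ|_F` is connected. -/
def ConnOn (F : Set G.E) : Prop := ∀ i j : G.V, G.Reach F i j

/-- The graph `G` is connected. -/
def Connected : Prop := G.ConnOn Set.univ

/-- The set of connected components of the subgraph `Γ|_F`. -/
def Comp (F : Set G.E) : Type := Quotient (Relation.EqvGen.setoid (G.Adj F))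

/-- A walk from `i` to `j`: a finite sequence of vertices together with a choice of an
edge from each vertex to the next. -/
inductive Walk : G.V → G.V → Type
  | nil (i : G.V) : Walk i i
  | cons {i j k : G.V} (e : G.E) (he : G.ends e = s(i, j)) (w : Walk j k) : Walk i k

namespace Walk

variable {G}

/-- The list of vertices visited by a walk, in order (starting vertex first). -/
def vertices : ∀ {i j : G.V}, G.Walk i j → List G.V
  | _, _, .nil a => [a]
  | _, _, @Walk.cons _ a _ _ _ _ w => a :: vertices w

/-- The list of edges traversed by a walk, in order. -/
def edges : ∀ {i j : G.V}, G.Walk i j → List G.E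
  | _, _, .nil _ => []
  | _, _, .cons e _ w => e :: edges w

/-- The list of steps `(source, edge, target)` of a walk. -/
def steps : ∀ {i j : G.V}, G.Walk i j → List (G.V × G.E × G.V)
  | _, _, .nil _ => []
  | _, _, @Walk.cons _ a b _ e _ w => (a, e, b) :: steps w

/-- All edges of the walk lie in the edge set `F`. -/
def In {i j : G.V} (w : G.Walk i j) (F : Set G.E) : Prop := ∀ e ∈ w.edges, e ∈ F

/-- A path: a walk all of whose vertices are distinct, except possibly the start and the
end vertex (and which does not traverse any edge twice). -/
def IsPath {i j : G.V} (w : G.Walk i j) : Prop :=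
  w.vertices.dropLast.Nodup ∧ w.vertices.tail.Nodup ∧ w.edges.Nodup

/-- Change the (definitionally equal) endpoints of a walk. -/
def copy : ∀ {i j i' j' : G.V}, G.Walk i j → i = i' → j = j' → G.Walk i' j'
  | _, _, _, _, w, rfl, rfl => w

variable (G)

end Walk

/-- `F` is cycle-free: the subgraph `Γ|_F` contains no cycle, i.e. every closed path
with edges in `F` is trivial. -/
def CycleFree (F : Set G.E) : Prop :=
  ∀ (i : G.V) (w : G.Walk i i), w.In F → w.IsPath → w.edges = []

/-- `T` is a spanning tree of `G`: the subgraph `Γ|_T` is connected and cycle-free. -/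
def IsSpanningTree (T : Set G.E) : Prop := G.ConnOn T ∧ G.CycleFree T

/-- `F` is a 2-forest: `Γ|_F` is cycle-free with exactly two connected components. -/
def IsTwoForest (F : Set G.E) : Prop := G.CycleFree F ∧ Nat.card (G.Comp F) = 2

/-- `M` is a maximal forest of the subgraph `Γ|_S`: it is a cycle-free subset of `S`
containing a spanning tree of each connected component of `Γ|_S` (equivalently,
inducing the same connected components as `S`). -/
def IsMaxForestOf (M S : Set G.E) : Prop :=
  M ⊆ S ∧ G.CycleFree M ∧ ∀ i j : G.V, G.Reach S i j ↔ G.Reach M i j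

/-- The sign `σ(i,j;k,ℓ;F)` attached to a 2-forest `F`: `+1` if one component of `Γ|_F`
contains `i` and `k` and the other contains `j` and `ℓ`; `-1` if one component contains
`i` and `ℓ` and the other contains `j` and `k`; `0` otherwise. -/
noncomputable def sigma2 (F : Set G.E) (i j k l : G.V) : ℝ :=
  if ¬ G.Reach F i j ∧ G.Reach F i k ∧ G.Reach F j l then 1
  else if ¬ G.Reach F i j ∧ G.Reach F i l ∧ G.Reach F j k then -1
  else 0

end RGraph

namespace RGraph

variable (G : RGraph)

/-- An oriented edge: an edge together with an ordering of its endpoints. -/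
def OEdge : Type := {x : G.E × G.V × G.V // G.ends x.1 = s(x.2.1, x.2.2)}

noncomputable instance : Fintype G.OEdge := Subtype.fintype _

namespace OEdge

variable {G}

/-- The underlying edge of an oriented edge. -/
def edge (o : G.OEdge) : G.E := o.1.1

/-- The source of an oriented edge. -/
def src (o : G.OEdge) : G.V := o.1.2.1

/-- The target of an oriented edge. -/
def tgt (o : G.OEdge) : G.V := o.1.2.2

/-- The reversal of an oriented edge. -/
def rev (o : G.OEdge) : G.OEdge := ⟨(o.1.1, o.1.2.2, o.1.2.1), o.2.trans Sym2.eq_swap⟩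

end OEdge

/-- An edge current assignment: a real-valued function on oriented edges with
`I(e : i → j) = −I(e : j → i)`. -/
def IsCurrent (I : G.OEdge → ℝ) : Prop := ∀ o : G.OEdge, I o.rev = - I o

/-- The edge current assignment `I` is consistent with the vertex current assignment `D`:
for every vertex `i`, `Σ_j Σ_{edges e : i → j} I(e : i → j) = D i`. -/
def Consistent (I : G.OEdge → ℝ) (D : G.V → ℝ) : Prop :=
  ∀ x : G.V, (∑ o ∈ Finset.univ.filter (fun o : G.OEdge => o.src = x), I o) = D x

lemma exists_oedge (e : G.E) : ∃ o : G.OEdge, o.edge = e := by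
  have h : ∀ z : Sym2 G.V, G.ends e = z → ∃ o : G.OEdge, o.edge = e := by
    refine Sym2.ind (fun a b h => ?_)
    exact ⟨⟨(e, a, b), h⟩, rfl⟩
  exact h (G.ends e) rfl

/-- A choice of orientation for each edge. -/
noncomputable def orient (e : G.E) : G.OEdge := Classical.choose (G.exists_oedge e)

lemma orient_edge (e : G.E) : (G.orient e).edge = e := Classical.choose_spec (G.exists_oedge e)

/-- The power dissipated by an edge current assignment: `Σ_{e ∈ Ed(Γ)} μ(e) I(e)²`. -/
noncomputable def power (μ : G.E → ℝ) (I : G.OEdge → ℝ) : ℝ :=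
  ∑ e : G.E, μ e * (I (G.orient e)) ^ 2

/-- The Green's function `g(Γ, μ; D, E) = Dᵀ v` for any `v` with `L v = E`
(for `Γ` connected, `μ` proper, and `D`, `E` zero-sum vectors, such a `v` exists and
`Dᵀ v` does not depend on the choice). -/
noncomputable def green (μ : G.E → ℝ) (D E : G.V → ℝ) : ℝ :=
  if h : ∃ v : G.V → ℝ, G.lap μ v = E then ∑ x : G.V, D x * Classical.choose h x else 0

/-- The contracted graph `Γ/S`: identify the two endpoints of each edge in `S` and
delete the edges in `S`. -/
noncomputable def contract (S : Set G.E) : RGraph :=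
  letI : DecidableEq (Quotient (Relation.EqvGen.setoid (G.Adj S))) := Classical.decEq _
  letI : DecidablePred (· ∈ S) := Classical.decPred _
  { V := Quotient (Relation.EqvGen.setoid (G.Adj S))
    E := {e : G.E // e ∉ S}
    ends := fun e => (G.ends e.1).map (Quotient.mk (Relation.EqvGen.setoid (G.Adj S))) }

/-- The quotient map `[·] : Vert(Γ) → Vert(Γ/S)`. -/
noncomputable def cmk (S : Set G.E) (x : G.V) : (G.contract S).V :=
  Quotient.mk (Relation.EqvGen.setoid (G.Adj S)) x

/-- The edge of `Γ` underlying an edge of `Γ/S` (recall `Ed(Γ/S) = Ed(Γ)∖S`). -/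
noncomputable def cval (S : Set G.E) (e : (G.contract S).E) : G.E := e.1

/-- The subset of `Ed(Γ/S) = Ed(Γ)∖S` induced by a subset `F ⊆ Ed(Γ)`, namely `F∖S`. -/
noncomputable def cset (S : Set G.E) (F : Set G.E) : Set (G.contract S).E :=
  {e : (G.contract S).E | G.cval S e ∈ F}

/-- The linear map `[·] : ℝ^{Vert(Γ)} → ℝ^{Vert(Γ/S)}` sending the basis vector `e_i`
to `e_{[i]}`. -/
noncomputable def pushVec (S : Set G.E) (D : G.V → ℝ) : (G.contract S).V → ℝ := fun x =>
  ∑ i ∈ Finset.univ.filter (fun i : G.V => G.cmk S i = x), D i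

/-- Contraction of walks: delete from a walk in `Γ` the edges belonging to `S`,
obtaining a walk in `Γ/S`. -/
noncomputable def contractWalk (S : Set G.E) :
    ∀ {i j : G.V}, G.Walk i j → (G.contract S).Walk (G.cmk S i) (G.cmk S j)
  | _, _, .nil a => .nil (G.cmk S a)
  | _, _, @Walk.cons _ a b _ e he w =>
    if hS : e ∈ S then
      (contractWalk S w).copy
        (Quotient.sound (Relation.EqvGen.rel b a ⟨e, hS, he.trans Sym2.eq_swap⟩)) rfl
    else
      Walk.cons (j := G.cmk S b) ⟨e, hS⟩
        (by show Sym2.map _ (G.ends e) = s(G.cmk S a, G.cmk S b)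
            rw [he]
            exact Sym2.map_pair_eq _ a b) (contractWalk S w)

/-- The current `I_{Γ|_T}(e : i → j)` flowing along the oriented edge `e : i → j` when a
unit current from `k` to `ℓ` is imposed on the spanning tree `Γ|_T`: it is `+1` if `e ∈ T`
and the unique path in `Γ|_T` from `k` to `ℓ` traverses `e` from `i` to `j`, `−1` if it
traverses `e` from `j` to `i`, and `0` otherwise. -/
noncomputable def treeCurrent (T : Set G.E) (k l : G.V) (e : G.E) (i j : G.V) : ℝ :=
  if e ∈ T ∧ ∃ w : G.Walk k l, w.IsPath ∧ w.In T ∧ (i, e, j) ∈ w.steps then 1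
  else if e ∈ T ∧ ∃ w : G.Walk k l, w.IsPath ∧ w.In T ∧ (j, e, i) ∈ w.steps then -1
  else 0

/-- The extended Green's function on possibly improper resistances: contract the edges of
zero resistance and take the Green's function of the resulting proper network, with the
pushed-forward vertex vectors. -/
noncomputable def egreen (μ : G.E → ℝ) (D E : G.V → ℝ) : ℝ :=
  (G.contract {e : G.E | μ e = 0}).green (fun e => μ (G.cval {e : G.E | μ e = 0} e))
    (G.pushVec {e : G.E | μ e = 0} D) (G.pushVec {e : G.E | μ e = 0} E)

end RGraph

/-!
For proper `μ`, Thomson's principle identifies `g(Γ, μ; A, A)` with the least power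
`Σ μ(e) I(e)²` dissipated by an edge current `I` of divergence `A`. This infimum makes sense
for every `μ ≥ 0` and is continuous there: as an infimum of linear functions of `μ` it is
upper semicontinuous, and since `μ₀ ≤ c • μ` for `μ` near `μ₀` and any `c > 1`, it is also
lower semicontinuous. Polarization,
`g(D, E) = (g(D + E, D + E) - g(D - E, D - E)) / 4`, transfers this to `g(Γ, μ; D, E)`.
-/

open Filter Topology

lemma eventually_le_mul_nhdsWithin_nonneg {ι : Type*} [Finite ι] {x₀ : ι → ℝ}
    (hx₀ : ∀ i, 0 ≤ x₀ i) {c : ℝ} (hc : 1 < c) :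
    ∀ᶠ x in 𝓝[{x | ∀ i, 0 ≤ x i}] x₀, ∀ i, x₀ i ≤ c * x i := by
  refine eventually_all.mpr fun i => ?_
  rcases (hx₀ i).eq_or_lt with h_zero | h_pos
  · exact eventually_nhdsWithin_of_forall fun x hx => by
      rw [← h_zero]
      exact mul_nonneg (by linarith) (hx i)
  · have h_near : ∀ᶠ x in 𝓝 x₀, x₀ i / c < x i :=
      (continuous_apply i).continuousAt.eventually (lt_mem_nhds (div_lt_self h_pos hc))
    filter_upwards [nhdsWithin_le_nhds h_near] with x hx
    rw [div_lt_iff₀ (by linarith)] at hx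
    linarith

namespace RGraph

variable {G : RGraph}

namespace OEdge

@[simp] lemma edge_rev (o : G.OEdge) : o.rev.edge = o.edge := rfl
@[simp] lemma src_rev (o : G.OEdge) : o.rev.src = o.tgt := rfl
@[simp] lemma tgt_rev (o : G.OEdge) : o.rev.tgt = o.src := rfl

lemma rev_involutive : Function.Involutive (rev : G.OEdge → G.OEdge) := fun _ => rfl

lemma ends_edge (o : G.OEdge) : G.ends o.edge = s(o.src, o.tgt) := o.2

lemma ext {o o' : G.OEdge} (h_edge : o.edge = o'.edge) (h_src : o.src = o'.src)
    (h_tgt : o.tgt = o'.tgt) : o = o' :=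
  Subtype.ext (Prod.ext h_edge (Prod.ext h_src h_tgt))

end OEdge

lemma sum_rev {M : Type*} [AddCommMonoid M] (f : G.OEdge → M) :
    ∑ o : G.OEdge, f o.rev = ∑ o, f o :=
  Equiv.sum_comp (OEdge.rev_involutive.toPerm _) f

lemma eq_orient_or_eq_orient_rev {o : G.OEdge} {e : G.E} (ho : o.edge = e) :
    o = G.orient e ∨ o = (G.orient e).rev := by
  have h : s(o.src, o.tgt) = s((G.orient e).src, (G.orient e).tgt) := by
    rw [← o.ends_edge, ← (G.orient e).ends_edge, ho, G.orient_edge]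
  rcases Sym2.eq_iff.mp h with ⟨h_src, h_tgt⟩ | ⟨h_src, h_tgt⟩
  · exact .inl (OEdge.ext (by rw [ho, G.orient_edge]) h_src h_tgt)
  · exact .inr (OEdge.ext (by rw [ho, OEdge.edge_rev, G.orient_edge]) h_src h_tgt)

lemma filter_edge_eq (e : G.E) :
    Finset.univ.filter (fun o : G.OEdge => o.edge = e) = {G.orient e, (G.orient e).rev} := by
  ext o
  simp only [Finset.mem_filter, Finset.mem_univ, true_and, Finset.mem_insert,
    Finset.mem_singleton]
  refine ⟨eq_orient_or_eq_orient_rev, ?_⟩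
  rintro (rfl | rfl) <;> exact G.orient_edge e

lemma IsCurrent.eq_zero_of_rev_eq {I : G.OEdge → ℝ} (hI : G.IsCurrent I) {o : G.OEdge}
    (ho : o.rev = o) : I o = 0 := by
  have := hI o
  rw [ho] at this
  linarith

lemma two_mul_power {μ : G.E → ℝ} {I : G.OEdge → ℝ} (hI : G.IsCurrent I) :
    2 * G.power μ I = ∑ o, μ o.edge * I o ^ 2 := by
  rw [power, Finset.mul_sum, ← Finset.sum_fiberwise Finset.univ OEdge.edge]
  refine Finset.sum_congr rfl fun e _ => ?_
  rw [filter_edge_eq]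
  by_cases hloop : (G.orient e).rev = G.orient e
  · rw [hloop, Finset.pair_eq_singleton, Finset.sum_singleton, hI.eq_zero_of_rev_eq hloop]
    ring
  · rw [Finset.sum_pair (Ne.symm hloop), OEdge.edge_rev, hI, G.orient_edge]
    ring

lemma power_nonneg {μ : G.E → ℝ} (hμ : ∀ e, 0 ≤ μ e) (I : G.OEdge → ℝ) :
    0 ≤ G.power μ I :=
  Finset.sum_nonneg fun e _ => mul_nonneg (hμ e) (sq_nonneg _)

lemma continuous_power (I : G.OEdge → ℝ) : Continuous fun μ : G.E → ℝ => G.power μ I := by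
  unfold power
  fun_prop

noncomputable def divergence (I : G.OEdge → ℝ) (x : G.V) : ℝ :=
  ∑ o ∈ Finset.univ.filter (fun o : G.OEdge => o.src = x), I o

lemma consistent_iff {I : G.OEdge → ℝ} {A : G.V → ℝ} :
    G.Consistent I A ↔ divergence I = A :=
  funext_iff.symm

lemma dotProduct_divergence (u : G.V → ℝ) (I : G.OEdge → ℝ) :
    u ⬝ᵥ divergence I = ∑ o, u o.src * I o := by
  rw [← Finset.sum_fiberwise Finset.univ OEdge.src]
  refine Finset.sum_congr rfl fun x _ => ?_
  rw [divergence, Finset.mul_sum]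
  exact Finset.sum_congr rfl fun o ho => by rw [(Finset.mem_filter.mp ho).2]

lemma sum_sub_mul_eq_two_mul_dotProduct {J : G.OEdge → ℝ} (hJ : G.IsCurrent J)
    (u : G.V → ℝ) :
    ∑ o, (u o.src - u o.tgt) * J o = 2 * (u ⬝ᵥ divergence J) := by
  have h_tgt : ∑ o, u o.tgt * J o = -∑ o, u o.src * J o := by
    rw [← sum_rev, ← Finset.sum_neg_distrib]
    refine Finset.sum_congr rfl fun o _ => ?_
    rw [OEdge.tgt_rev, hJ]
    ring
  simp only [sub_mul, Finset.sum_sub_distrib, h_tgt, dotProduct_divergence]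
  ring

noncomputable def potentialCurrent (μ : G.E → ℝ) (v : G.V → ℝ) (o : G.OEdge) : ℝ :=
  (v o.src - v o.tgt) / μ o.edge

lemma isCurrent_potentialCurrent (μ : G.E → ℝ) (v : G.V → ℝ) :
    G.IsCurrent (potentialCurrent μ v) := fun o => by
  simp only [potentialCurrent, OEdge.src_rev, OEdge.tgt_rev, OEdge.edge_rev]
  ring

/-- Oriented edges with source `x` correspond to pairs `(j, e)` with `e : x → j`. -/
lemma divergence_potentialCurrent (μ : G.E → ℝ) (v : G.V → ℝ) :
    divergence (potentialCurrent μ v) = G.lap μ v := by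
  funext x
  simp only [lap, ← Finset.sum_filter]
  rw [Finset.sum_sigma']
  refine Finset.sum_bij' (fun o _ => ⟨o.tgt, o.edge⟩)
    (fun p hp => (⟨(p.2, x, p.1), by simpa using hp⟩ : G.OEdge)) ?_ ?_ ?_ ?_ ?_
  · intro o ho
    simp only [Finset.mem_filter, Finset.mem_univ, true_and] at ho
    simp [← ho, o.ends_edge]
  · exact fun _ _ => Finset.mem_filter.mpr ⟨Finset.mem_univ _, rfl⟩
  · intro o ho
    simp only [Finset.mem_filter, Finset.mem_univ, true_and] at ho
    exact OEdge.ext rfl ho.symm rfl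
  · intro p _
    rfl
  · intro o ho
    simp only [Finset.mem_filter, Finset.mem_univ, true_and] at ho
    simp [potentialCurrent, ho]

lemma consistent_potentialCurrent {μ : G.E → ℝ} {v A : G.V → ℝ} (hv : G.lap μ v = A) :
    G.Consistent (potentialCurrent μ v) A :=
  consistent_iff.mpr ((divergence_potentialCurrent μ v).trans hv)

lemma two_mul_dotProduct_lap (μ : G.E → ℝ) (v w : G.V → ℝ) :
    2 * (v ⬝ᵥ G.lap μ w) = ∑ o, (v o.src - v o.tgt) * potentialCurrent μ w o := by
  rw [← divergence_potentialCurrent,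
    sum_sub_mul_eq_two_mul_dotProduct (isCurrent_potentialCurrent μ w)]

lemma dotProduct_lap_comm (μ : G.E → ℝ) (v w : G.V → ℝ) :
    v ⬝ᵥ G.lap μ w = w ⬝ᵥ G.lap μ v := by
  refine mul_left_cancel₀ two_ne_zero ?_
  rw [two_mul_dotProduct_lap, two_mul_dotProduct_lap]
  refine Finset.sum_congr rfl fun o _ => ?_
  simp only [potentialCurrent]
  ring

lemma sum_lap_eq_zero (μ : G.E → ℝ) (v : G.V → ℝ) : ∑ x, G.lap μ v x = 0 := by
  have h := two_mul_dotProduct_lap μ 1 v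
  simp only [Pi.one_apply, sub_self, zero_mul, Finset.sum_const_zero, one_dotProduct] at h
  linarith

noncomputable def lapLinearMap (μ : G.E → ℝ) : (G.V → ℝ) →ₗ[ℝ] G.V → ℝ where
  toFun := G.lap μ
  map_add' v w := by
    funext x
    simp only [lap, Pi.add_apply, ← Finset.sum_add_distrib]
    refine Finset.sum_congr rfl fun j _ => Finset.sum_congr rfl fun e _ => ?_
    split_ifs <;> ring
  map_smul' c v := by
    funext x
    simp only [lap, Pi.smul_apply, smul_eq_mul, RingHom.id_apply, Finset.mul_sum]
    refine Finset.sum_congr rfl fun j _ => Finset.sum_congr rfl fun e _ => ?_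
    split_ifs <;> ring

@[simp] lemma lapLinearMap_apply (μ : G.E → ℝ) (v : G.V → ℝ) :
    lapLinearMap μ v = G.lap μ v := rfl

lemma Reach.apply_eq {α : Type*} {F : Set G.E} {f : G.V → α}
    (hf : ∀ i j, G.Adj F i j → f i = f j) {i j : G.V} (h : G.Reach F i j) : f i = f j :=
  (Equivalence.eqvGen_iff (r := fun a b => f a = f b) ⟨fun _ => rfl, Eq.symm, Eq.trans⟩).mp
    (Relation.EqvGen.mono hf _ _ h)

/-- `2 vᵀ L v` is a sum of the nonnegative terms `(v i - v j)² / μ e`. -/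
lemma src_eq_tgt_of_lap_eq_zero {μ : G.E → ℝ} (hμ : ∀ e, 0 < μ e) {v : G.V → ℝ}
    (hv : G.lap μ v = 0) (o : G.OEdge) : v o.src = v o.tgt := by
  have h := two_mul_dotProduct_lap μ v v
  have h_term : ∀ o : G.OEdge, (v o.src - v o.tgt) * potentialCurrent μ v o
      = (v o.src - v o.tgt) ^ 2 / μ o.edge := fun o => by
    rw [potentialCurrent]
    ring
  simp only [hv, dotProduct_zero, mul_zero, h_term] at h
  have h_nonneg : ∀ o : G.OEdge, 0 ≤ (v o.src - v o.tgt) ^ 2 / μ o.edge :=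
    fun o => div_nonneg (sq_nonneg _) (hμ o.edge).le
  have h_zero := (Finset.sum_eq_zero_iff_of_nonneg fun o _ => h_nonneg o).mp h.symm o
    (Finset.mem_univ o)
  rw [div_eq_zero_iff, sq_eq_zero_iff, sub_eq_zero] at h_zero
  exact h_zero.resolve_right (hμ o.edge).ne'

lemma eq_of_lap_eq_zero {μ : G.E → ℝ} (hμ : ∀ e, 0 < μ e) (hG : G.Connected)
    {v : G.V → ℝ} (hv : G.lap μ v = 0) (i j : G.V) : v i = v j :=
  (hG i j).apply_eq fun a b ⟨e, _, he⟩ => src_eq_tgt_of_lap_eq_zero hμ hv ⟨(e, a, b), he⟩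

lemma eq_zero_of_lap_eq_zero {μ : G.E → ℝ} (hμ : ∀ e, 0 < μ e) (hG : G.Connected)
    {v : G.V → ℝ} (hv : G.lap μ v = 0) (hsum : ∑ x, v x = 0) : v = 0 := by
  funext x
  have hcard : (Fintype.card G.V : ℝ) ≠ 0 := by
    have : Nonempty G.V := ⟨x⟩
    exact_mod_cast Fintype.card_ne_zero
  rw [Finset.sum_congr rfl fun y _ => eq_of_lap_eq_zero hμ hG hv y x, Finset.sum_const,
    Finset.card_univ, nsmul_eq_mul] at hsum
  exact (mul_eq_zero.mp hsum).resolve_left hcard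

/-- The Laplacian restricts to an injective, hence surjective, endomorphism of the
zero-sum vectors. -/
lemma exists_lap_eq {μ : G.E → ℝ} (hμ : ∀ e, 0 < μ e) (hG : G.Connected)
    {A : G.V → ℝ} (hA : ∑ x, A x = 0) : ∃ v, G.lap μ v = A := by
  let U : Submodule ℝ (G.V → ℝ) :=
    LinearMap.ker (LinearMap.lsum ℝ (fun _ : G.V => ℝ) ℝ fun _ => LinearMap.id)
  have mem_U (v : G.V → ℝ) : v ∈ U ↔ ∑ x, v x = 0 := by simp [U]
  let L : U →ₗ[ℝ] U :=
    (lapLinearMap μ).restrict fun v _ => (mem_U _).mpr (sum_lap_eq_zero μ v)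
  have hL : Function.Injective L := by
    refine (injective_iff_map_eq_zero L).mpr fun u hu => Subtype.ext ?_
    exact eq_zero_of_lap_eq_zero hμ hG (congrArg Subtype.val hu) ((mem_U u).mp u.2)
  obtain ⟨u, hu⟩ := LinearMap.injective_iff_surjective.mp hL ⟨A, (mem_U A).mpr hA⟩
  exact ⟨u, congrArg Subtype.val hu⟩

lemma nonempty_consistent_current (hG : G.Connected) {A : G.V → ℝ} (hA : ∑ x, A x = 0) :
    Nonempty {I : G.OEdge → ℝ // G.IsCurrent I ∧ G.Consistent I A} := by
  obtain ⟨v, hv⟩ := exists_lap_eq (μ := 1) (fun _ => one_pos) hG hA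
  exact ⟨⟨_, isCurrent_potentialCurrent 1 v, consistent_potentialCurrent hv⟩⟩

lemma green_eq_dotProduct {μ : G.E → ℝ} (hμ : ∀ e, 0 < μ e) (hG : G.Connected)
    {D E v : G.V → ℝ} (hD : ∑ x, D x = 0) (hv : G.lap μ v = E) :
    G.green μ D E = D ⬝ᵥ v := by
  have hex : ∃ w, G.lap μ w = E := ⟨v, hv⟩
  rw [green, dif_pos hex]
  set w := Classical.choose hex
  have h_harm : G.lap μ (w - v) = 0 := by
    rw [← lapLinearMap_apply, map_sub, lapLinearMap_apply, lapLinearMap_apply,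
      Classical.choose_spec hex, hv, sub_self]
  rcases isEmpty_or_nonempty G.V with _ | ⟨⟨x₀⟩⟩
  · simp [dotProduct]
  have h_zero : D ⬝ᵥ (w - v) = 0 := by
    rw [dotProduct, Finset.sum_congr rfl fun x _ => by rw [eq_of_lap_eq_zero hμ hG h_harm x x₀],
      ← Finset.sum_mul, hD, zero_mul]
  rw [dotProduct_sub, sub_eq_zero] at h_zero
  exact h_zero

lemma green_eq_polarization {μ : G.E → ℝ} (hμ : ∀ e, 0 < μ e) (hG : G.Connected)
    {D E : G.V → ℝ} (hD : ∑ x, D x = 0) (hE : ∑ x, E x = 0) :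
    G.green μ D E = (G.green μ (D + E) (D + E) - G.green μ (D - E) (D - E)) / 4 := by
  obtain ⟨vD, hvD⟩ := exists_lap_eq hμ hG hD
  obtain ⟨vE, hvE⟩ := exists_lap_eq hμ hG hE
  have hv_add : G.lap μ (vD + vE) = D + E := by
    rw [← lapLinearMap_apply, map_add, lapLinearMap_apply, lapLinearMap_apply, hvD, hvE]
  have hv_sub : G.lap μ (vD - vE) = D - E := by
    rw [← lapLinearMap_apply, map_sub, lapLinearMap_apply, lapLinearMap_apply, hvD, hvE]
  have h_symm : E ⬝ᵥ vD = D ⬝ᵥ vE := by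
    rw [← hvE, ← hvD, dotProduct_comm, dotProduct_lap_comm, dotProduct_comm]
  rw [green_eq_dotProduct hμ hG hD hvE,
    green_eq_dotProduct hμ hG (by simp [Finset.sum_add_distrib, hD, hE]) hv_add,
    green_eq_dotProduct hμ hG (by simp [Finset.sum_sub_distrib, hD, hE]) hv_sub]
  simp only [add_dotProduct, dotProduct_add, sub_dotProduct, dotProduct_sub, h_symm]
  ring

lemma power_potentialCurrent {μ : G.E → ℝ} (hμ : ∀ e, 0 < μ e) {v A : G.V → ℝ}
    (hv : G.lap μ v = A) : G.power μ (potentialCurrent μ v) = A ⬝ᵥ v := by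
  have h_term : ∀ o : G.OEdge, μ o.edge * potentialCurrent μ v o ^ 2
      = (v o.src - v o.tgt) * potentialCurrent μ v o := fun o => by
    have := (hμ o.edge).ne'
    rw [potentialCurrent]
    field_simp
  have h := two_mul_power (μ := μ) (isCurrent_potentialCurrent μ v)
  rw [Finset.sum_congr rfl fun o _ => h_term o, ← two_mul_dotProduct_lap, hv,
    dotProduct_comm] at h
  linarith

/-- Thomson's principle: sum `μ I² ≥ 2 d I - d² / μ`, where `d = v i - v j`, over the
oriented edges `e : i → j`. -/
lemma dotProduct_le_power {μ : G.E → ℝ} (hμ : ∀ e, 0 < μ e) {v A : G.V → ℝ}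
    (hv : G.lap μ v = A) {I : G.OEdge → ℝ} (hI : G.IsCurrent I) (hIA : G.Consistent I A) :
    A ⬝ᵥ v ≤ G.power μ I := by
  have h_pointwise : ∀ o : G.OEdge,
      2 * ((v o.src - v o.tgt) * I o) - (v o.src - v o.tgt) * potentialCurrent μ v o
        ≤ μ o.edge * I o ^ 2 := fun o => by
    have hμo := (hμ o.edge).ne'
    have h_sq : μ o.edge * I o ^ 2 - (2 * ((v o.src - v o.tgt) * I o)
        - (v o.src - v o.tgt) * potentialCurrent μ v o)
          = (μ o.edge * I o - (v o.src - v o.tgt)) ^ 2 / μ o.edge := by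
      rw [potentialCurrent]
      field_simp
      ring
    rw [← sub_nonneg, h_sq]
    exact div_nonneg (sq_nonneg _) (hμ o.edge).le
  have h_sum := Finset.sum_le_sum fun o (_ : o ∈ Finset.univ) => h_pointwise o
  rw [Finset.sum_sub_distrib, ← Finset.mul_sum, sum_sub_mul_eq_two_mul_dotProduct hI,
    ← two_mul_dotProduct_lap, ← two_mul_power hI, consistent_iff.mp hIA, hv,
    dotProduct_comm] at h_sum
  linarith

noncomputable def minPower (A : G.V → ℝ) (μ : G.E → ℝ) : ℝ :=
  ⨅ I : {I : G.OEdge → ℝ // G.IsCurrent I ∧ G.Consistent I A}, G.power μ I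

variable {A : G.V → ℝ}

lemma bddBelow_range_power {μ : G.E → ℝ} (hμ : ∀ e, 0 ≤ μ e) :
    BddBelow (Set.range fun I : {I : G.OEdge → ℝ // G.IsCurrent I ∧ G.Consistent I A} =>
      G.power μ I) :=
  ⟨0, by rintro _ ⟨I, rfl⟩; exact power_nonneg hμ I⟩

lemma minPower_le_power {μ : G.E → ℝ} (hμ : ∀ e, 0 ≤ μ e) {I : G.OEdge → ℝ}
    (hI : G.IsCurrent I) (hIA : G.Consistent I A) : minPower A μ ≤ G.power μ I :=
  ciInf_le (bddBelow_range_power hμ) ⟨I, hI, hIA⟩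

lemma minPower_le_mul (hG : G.Connected) (hA : ∑ x, A x = 0) {μ ν : G.E → ℝ}
    (hμ : ∀ e, 0 ≤ μ e) {c : ℝ} (hc : 0 ≤ c) (hμν : ∀ e, μ e ≤ c * ν e) :
    minPower A μ ≤ c * minPower A ν := by
  have := nonempty_consistent_current hG hA
  rw [minPower, minPower, Real.mul_iInf_of_nonneg hc]
  refine ciInf_mono (bddBelow_range_power hμ) fun I => ?_
  rw [power, power, Finset.mul_sum]
  refine Finset.sum_le_sum fun e _ => ?_
  rw [← mul_assoc]
  exact mul_le_mul_of_nonneg_right (hμν e) (sq_nonneg _)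

lemma minPower_eq_green {μ : G.E → ℝ} (hμ : ∀ e, 0 < μ e) (hG : G.Connected)
    (hA : ∑ x, A x = 0) : minPower A μ = G.green μ A A := by
  obtain ⟨v, hv⟩ := exists_lap_eq hμ hG hA
  have := nonempty_consistent_current hG hA
  rw [green_eq_dotProduct hμ hG hA hv]
  refine le_antisymm ?_ (le_ciInf fun I => dotProduct_le_power hμ hv I.2.1 I.2.2)
  rw [← power_potentialCurrent hμ hv]
  exact minPower_le_power (fun e => (hμ e).le) (isCurrent_potentialCurrent μ v)
    (consistent_potentialCurrent hv)

theorem continuousOn_minPower (hG : G.Connected) (hA : ∑ x, A x = 0) :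
    ContinuousOn (minPower A) {μ : G.E → ℝ | ∀ e, 0 ≤ μ e} := by
  have := nonempty_consistent_current hG hA
  intro μ₀ hμ₀
  refine tendsto_order.mpr ⟨fun y hy => ?_, fun y hy => ?_⟩
  · have h_near_one : ∀ᶠ c in 𝓝[>] (1 : ℝ), c * y < minPower A μ₀ :=
      nhdsWithin_le_nhds <| (continuous_id.mul continuous_const).continuousAt.eventually
        (gt_mem_nhds (by simpa using hy))
    obtain ⟨c, hcy, hc⟩ := (h_near_one.and self_mem_nhdsWithin).exists
    filter_upwards [eventually_le_mul_nhdsWithin_nonneg hμ₀ hc, self_mem_nhdsWithin]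
      with μ hμ₀μ hμ
    have h := minPower_le_mul hG hA hμ₀ (by linarith) hμ₀μ
    exact lt_of_mul_lt_mul_left (hcy.trans_le h) (by linarith)
  · obtain ⟨I, hI⟩ := exists_lt_of_ciInf_lt hy
    filter_upwards [nhdsWithin_le_nhds ((continuous_power I.1).continuousAt.eventually
      (gt_mem_nhds hI)), self_mem_nhdsWithin] with μ hμI hμ
    exact (minPower_le_power hμ I.2.1 I.2.2).trans_lt hμI

end RGraph

theorem stmt13 (G : RGraph) (hG : G.Connected) (D E : G.V → ℝ)
    (hD : ∑ x : G.V, D x = 0) (hE : ∑ x : G.V, E x = 0) :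
    ∃ g : (G.E → ℝ) → ℝ, ContinuousOn g {μ : G.E → ℝ | ∀ e : G.E, 0 ≤ μ e} ∧
      ∀ μ : G.E → ℝ, (∀ e : G.E, 0 < μ e) → g μ = G.green μ D E := by
  have h_add : ∑ x, (D + E) x = 0 := by simp [Finset.sum_add_distrib, hD, hE]
  have h_sub : ∑ x, (D - E) x = 0 := by simp [Finset.sum_sub_distrib, hD, hE]
  refine ⟨fun μ => (RGraph.minPower (D + E) μ - RGraph.minPower (D - E) μ) / 4, ?_,
    fun μ hμ => ?_⟩
  · exact ((RGraph.continuousOn_minPower hG h_add).sub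
      (RGraph.continuousOn_minPower hG h_sub)).div_const 4
  · dsimp only
    rw [RGraph.green_eq_polarization hμ hG hD hE, RGraph.minPower_eq_green hμ hG h_add,
      RGraph.minPower_eq_green hμ hG h_sub]
end

section
/- Let Γ be a connected graph, let D ∈ ℝ^{Vert(Γ)} be a zero-sum vector, let μ ∈ ℝ_{>0}^{Ed(Γ)} be a proper resistance, and let v ∈ ℝ^{Vert(Γ)} satisfy Lv = D. Then for every oriented edge e : i → j, the induced current satisfies |(v_i − v_j)/μ(e)| ≤ ‖D‖, where ‖D‖ = Σ_{i ∈ Vert(Γ)} max{0, D_i}. -/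
open Classical
open scoped BigOperators

/-!
If `v i > v j`, let `A` be the set of vertices where the potential exceeds `v j`. Every edge
leaving `A` carries a nonnegative current out of `A`, and the total current leaving `A` equals
`∑_{x ∈ A} D x ≤ ‖D‖`, since the currents between vertices of `A` cancel. The edge `e : i → j`
leaves `A`, so its current is at most `‖D‖`; the reversed orientation gives the other sign.
-/

theorem Finset.sum_sum_eq_zero_of_antisymm {α M : Type*} [AddCommGroup M] [IsAddTorsionFree M]
    (s : Finset α) {f : α → α → M} (hf : ∀ x y, f x y = -f y x) :
    ∑ x ∈ s, ∑ y ∈ s, f x y = 0 := by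
  rw [← self_eq_neg]
  calc ∑ x ∈ s, ∑ y ∈ s, f x y = ∑ y ∈ s, ∑ x ∈ s, -f y x :=
        Finset.sum_comm.trans <| Finset.sum_congr rfl fun y _ =>
          Finset.sum_congr rfl fun x _ => hf x y
    _ = -∑ x ∈ s, ∑ y ∈ s, f x y := by simp only [Finset.sum_neg_distrib]

theorem Finset.sum_le_sum_max_zero {ι R : Type*} [Fintype ι] [AddCommMonoid R] [LinearOrder R]
    [IsOrderedAddMonoid R] (s : Finset ι) (f : ι → R) :
    ∑ x ∈ s, f x ≤ ∑ x, max 0 (f x) :=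
  calc ∑ x ∈ s, f x ≤ ∑ x ∈ s, max 0 (f x) :=
        Finset.sum_le_sum fun x _ => le_max_right 0 (f x)
    _ ≤ ∑ x, max 0 (f x) :=
        Finset.sum_le_sum_of_subset_of_nonneg (Finset.subset_univ s)
          fun x _ _ => le_max_left 0 (f x)

namespace RGraph

variable {G : RGraph} {μ : G.E → ℝ} {v : G.V → ℝ}

noncomputable def flow (μ : G.E → ℝ) (v : G.V → ℝ) (x y : G.V) : ℝ :=
  ∑ e : G.E, if G.ends e = s(x, y) then (v x - v y) / μ e else 0

theorem lap_eq_sum_flow (x : G.V) : G.lap μ v x = ∑ y, G.flow μ v x y := rfl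

theorem flow_antisymm (x y : G.V) : G.flow μ v x y = -G.flow μ v y x := by
  rw [flow, flow, ← Finset.sum_neg_distrib, Sym2.eq_swap]
  refine Finset.sum_congr rfl fun e _ => ?_
  split_ifs <;> ring

theorem flow_nonneg (hμ : ∀ e, 0 ≤ μ e) {x y : G.V} (hxy : v y ≤ v x) :
    0 ≤ G.flow μ v x y :=
  Finset.sum_nonneg fun e _ => by
    split_ifs
    exacts [div_nonneg (sub_nonneg.2 hxy) (hμ e), le_rfl]

theorem div_le_flow (hμ : ∀ e, 0 ≤ μ e) {e : G.E} {i j : G.V} (he : G.ends e = s(i, j))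
    (hij : v j ≤ v i) : (v i - v j) / μ e ≤ G.flow μ v i j := by
  have hterm_nonneg : ∀ e' ∈ Finset.univ,
      0 ≤ if G.ends e' = s(i, j) then (v i - v j) / μ e' else 0 := fun e' _ => by
    split_ifs
    exacts [div_nonneg (sub_nonneg.2 hij) (hμ e'), le_rfl]
  rw [flow]
  simpa only [he, if_true] using Finset.single_le_sum hterm_nonneg (Finset.mem_univ e)

theorem sum_lap_eq_sum_flow_compl (A : Finset G.V) :
    ∑ x ∈ A, G.lap μ v x = ∑ x ∈ A, ∑ y ∈ Aᶜ, G.flow μ v x y := by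
  simp only [lap_eq_sum_flow, ← Finset.sum_add_sum_compl A (G.flow μ v _),
    Finset.sum_add_distrib, Finset.sum_sum_eq_zero_of_antisymm A flow_antisymm, zero_add]

theorem div_le_sum_max_zero_lap (hμ : ∀ e, 0 ≤ μ e) {e : G.E} {i j : G.V}
    (he : G.ends e = s(i, j)) : (v i - v j) / μ e ≤ ∑ x, max 0 (G.lap μ v x) := by
  rcases le_or_gt (v i) (v j) with hij | hij
  · exact (div_nonpos_of_nonpos_of_nonneg (sub_nonpos.2 hij) (hμ e)).trans
      (Finset.sum_nonneg fun x _ => le_max_left _ _)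
  set A : Finset G.V := Finset.univ.filter fun x => v j < v x
  have hiA : i ∈ A := by simp [A, hij]
  have hjA : j ∈ Aᶜ := by simp [A]
  have hcut : ∀ x ∈ A, ∀ y ∈ Aᶜ, 0 ≤ G.flow μ v x y := fun x hx y hy => by
    simp only [A, Finset.mem_compl, Finset.mem_filter, Finset.mem_univ, true_and,
      not_lt] at hx hy
    exact flow_nonneg hμ (hy.trans hx.le)
  calc (v i - v j) / μ e ≤ G.flow μ v i j := div_le_flow hμ he hij.le
    _ ≤ ∑ y ∈ Aᶜ, G.flow μ v i y := Finset.single_le_sum (hcut i hiA) hjA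
    _ ≤ ∑ x ∈ A, ∑ y ∈ Aᶜ, G.flow μ v x y :=
        Finset.single_le_sum (fun x hx => Finset.sum_nonneg (hcut x hx)) hiA
    _ = ∑ x ∈ A, G.lap μ v x := (sum_lap_eq_sum_flow_compl A).symm
    _ ≤ ∑ x, max 0 (G.lap μ v x) := Finset.sum_le_sum_max_zero A _

end RGraph

theorem stmt14_general (G : RGraph) (D : G.V → ℝ)
    (μ : G.E → ℝ) (hμ : ∀ e : G.E, 0 < μ e) (v : G.V → ℝ) (hv : G.lap μ v = D)
    (e : G.E) (i j : G.V) (he : G.ends e = s(i, j)) :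
    |(v i - v j) / μ e| ≤ ∑ x : G.V, max 0 (D x) := by
  subst hv
  have hμ' : ∀ e, 0 ≤ μ e := fun e => (hμ e).le
  rw [abs_le, neg_le, ← neg_div, neg_sub]
  exact ⟨RGraph.div_le_sum_max_zero_lap hμ' (he.trans Sym2.eq_swap),
    RGraph.div_le_sum_max_zero_lap hμ' he⟩

theorem stmt14 (G : RGraph) (hG : G.Connected) (D : G.V → ℝ) (hD : ∑ x : G.V, D x = 0)
    (μ : G.E → ℝ) (hμ : ∀ e : G.E, 0 < μ e) (v : G.V → ℝ) (hv : G.lap μ v = D)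
    (e : G.E) (i j : G.V) (he : G.ends e = s(i, j)) :
    |(v i - v j) / μ e| ≤ ∑ x : G.V, max 0 (D x) :=
  stmt14_general G D μ hμ v hv e i j he
end

section
/- Let Γ be a connected graph and let D, E ∈ ℝ^{Vert(Γ)} be zero-sum vectors, and denote by g(Γ, ·; D, E) the extended Green's function on ℝ_{≥0}^{Ed(Γ)} (defined on improper resistances via contraction of the zero-resistance edges). Then: (i) g(Γ, a·μ; D, E) = a · g(Γ, μ; D, E) for all a ∈ ℝ_{≥0} and μ ∈ ℝ_{≥0}^{Ed(Γ)}; (ii) g(Γ, Σ_{i=1}^n μ_i; D, D) ≥ Σ_{i=1}^n g(Γ, μ_i; D, D) for all μ₁, …, μ_n ∈ ℝ_{≥0}^{Ed(Γ)}; (iii) if μ, μ' ∈ ℝ_{≥0}^{Ed(Γ)} satisfy μ(e) ≤ μ'(e) for all edges e, then g(Γ, μ; D, D) ≤ g(Γ, μ'; D, D), and if moreover equality holds and μ' is proper, then for each edge e : i → j either μ(e) = μ'(e) or no current flows along e in (Γ, μ'), i.e. v'_i = v'_j for v' with L_{μ'} v' = D. -/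
open Classical
open scoped BigOperators

/-- A graph: a finite set of vertices, a finite set of edges, and a map assigning to
each edge its unordered pair of endpoints (loops and parallel edges allowed). -/
structure Graph' where
  V : Type
  E : Type
  [fintV : Fintype V]
  [decV : DecidableEq V]
  [fintE : Fintype E]
  [decE : DecidableEq E]
  ends : E → Sym2 V

attribute [instance] Graph'.fintV Graph'.decV Graph'.fintE Graph'.decE

namespace Graph'

variable (G : Graph')

/-- The Laplacian of the resistive network `(G, μ)` applied to a voltage assignment `v`:
`(L v) i = Σ_j Σ_{edges e : i → j} (v i − v j) / μ e`. -/
noncomputable def lap (μ : G.E → ℝ) (v : G.V → ℝ) : G.V → ℝ := fun i =>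
  ∑ j : G.V, ∑ e : G.E, if G.ends e = s(i, j) then (v i - v j) / μ e else 0

/-- `i` and `j` are joined by an edge belonging to `F`. -/
def Adj (F : Set G.E) (i j : G.V) : Prop := ∃ e ∈ F, G.ends e = s(i, j)

/-- `i` and `j` lie in the same connected component of the subgraph `Γ|_F`
(the subgraph with all vertices of `Γ` and edge set `F`). -/
def Reach (F : Set G.E) (i j : G.V) : Prop := Relation.EqvGen (G.Adj F) i j

/-- The subgraph `Γ|_F` is connected. -/
def ConnOn (F : Set G.E) : Prop := ∀ i j : G.V, G.Reach F i j

/-- The graph `G` is connected. -/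
def Connected : Prop := G.ConnOn Set.univ

/-- The set of connected components of the subgraph `Γ|_F`. -/
def Comp (F : Set G.E) : Type := Quotient (Relation.EqvGen.setoid (G.Adj F))

/-- A walk from `i` to `j`: a finite sequence of vertices together with a choice of an
edge from each vertex to the next. -/
inductive Walk : G.V → G.V → Type
  | nil (i : G.V) : Walk i i
  | cons {i j k : G.V} (e : G.E) (he : G.ends e = s(i, j)) (w : Walk j k) : Walk i k

namespace Walk

variable {G}

/-- The list of vertices visited by a walk, in order (starting vertex first). -/
def vertices : ∀ {i j : G.V}, G.Walk i j → List G.V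
  | _, _, .nil a => [a]
  | _, _, @Walk.cons _ a _ _ _ _ w => a :: vertices w

/-- The list of edges traversed by a walk, in order. -/
def edges : ∀ {i j : G.V}, G.Walk i j → List G.E
  | _, _, .nil _ => []
  | _, _, .cons e _ w => e :: edges w

/-- The list of steps `(source, edge, target)` of a walk. -/
def steps : ∀ {i j : G.V}, G.Walk i j → List (G.V × G.E × G.V)
  | _, _, .nil _ => []
  | _, _, @Walk.cons _ a b _ e _ w => (a, e, b) :: steps w

/-- All edges of the walk lie in the edge set `F`. -/
def In {i j : G.V} (w : G.Walk i j) (F : Set G.E) : Prop := ∀ e ∈ w.edges, e ∈ F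

/-- A path: a walk all of whose vertices are distinct, except possibly the start and the
end vertex (and which does not traverse any edge twice). -/
def IsPath {i j : G.V} (w : G.Walk i j) : Prop :=
  w.vertices.dropLast.Nodup ∧ w.vertices.tail.Nodup ∧ w.edges.Nodup

/-- Change the (definitionally equal) endpoints of a walk. -/
def copy : ∀ {i j i' j' : G.V}, G.Walk i j → i = i' → j = j' → G.Walk i' j'
  | _, _, _, _, w, rfl, rfl => w

variable (G)

end Walk

/-- `F` is cycle-free: the subgraph `Γ|_F` contains no cycle, i.e. every closed path
with edges in `F` is trivial. -/
def CycleFree (F : Set G.E) : Prop :=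
  ∀ (i : G.V) (w : G.Walk i i), w.In F → w.IsPath → w.edges = []

/-- `T` is a spanning tree of `G`: the subgraph `Γ|_T` is connected and cycle-free. -/
def IsSpanningTree (T : Set G.E) : Prop := G.ConnOn T ∧ G.CycleFree T

/-- `F` is a 2-forest: `Γ|_F` is cycle-free with exactly two connected components. -/
def IsTwoForest (F : Set G.E) : Prop := G.CycleFree F ∧ Nat.card (G.Comp F) = 2

/-- `M` is a maximal forest of the subgraph `Γ|_S`: it is a cycle-free subset of `S`
containing a spanning tree of each connected component of `Γ|_S` (equivalently,
inducing the same connected components as `S`). -/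
def IsMaxForestOf (M S : Set G.E) : Prop :=
  M ⊆ S ∧ G.CycleFree M ∧ ∀ i j : G.V, G.Reach S i j ↔ G.Reach M i j

/-- The sign `σ(i,j;k,ℓ;F)` attached to a 2-forest `F`: `+1` if one component of `Γ|_F`
contains `i` and `k` and the other contains `j` and `ℓ`; `-1` if one component contains
`i` and `ℓ` and the other contains `j` and `k`; `0` otherwise. -/
noncomputable def sigma2 (F : Set G.E) (i j k l : G.V) : ℝ :=
  if ¬ G.Reach F i j ∧ G.Reach F i k ∧ G.Reach F j l then 1
  else if ¬ G.Reach F i j ∧ G.Reach F i l ∧ G.Reach F j k then -1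
  else 0

end Graph'

namespace Graph'

variable (G : Graph')

/-- An oriented edge: an edge together with an ordering of its endpoints. -/
def OEdge : Type := {x : G.E × G.V × G.V // G.ends x.1 = s(x.2.1, x.2.2)}

noncomputable instance : Fintype G.OEdge := Subtype.fintype _

namespace OEdge

variable {G}

/-- The underlying edge of an oriented edge. -/
def edge (o : G.OEdge) : G.E := o.1.1

/-- The source of an oriented edge. -/
def src (o : G.OEdge) : G.V := o.1.2.1

/-- The target of an oriented edge. -/
def tgt (o : G.OEdge) : G.V := o.1.2.2

/-- The reversal of an oriented edge. -/
def rev (o : G.OEdge) : G.OEdge := ⟨(o.1.1, o.1.2.2, o.1.2.1), o.2.trans Sym2.eq_swap⟩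

end OEdge

/-- An edge current assignment: a real-valued function on oriented edges with
`I(e : i → j) = −I(e : j → i)`. -/
def IsCurrent (I : G.OEdge → ℝ) : Prop := ∀ o : G.OEdge, I o.rev = - I o

/-- The edge current assignment `I` is consistent with the vertex current assignment `D`:
for every vertex `i`, `Σ_j Σ_{edges e : i → j} I(e : i → j) = D i`. -/
def Consistent (I : G.OEdge → ℝ) (D : G.V → ℝ) : Prop :=
  ∀ x : G.V, (∑ o ∈ Finset.univ.filter (fun o : G.OEdge => o.src = x), I o) = D x

lemma exists_oedge (e : G.E) : ∃ o : G.OEdge, o.edge = e := by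
  have h : ∀ z : Sym2 G.V, G.ends e = z → ∃ o : G.OEdge, o.edge = e := by
    refine Sym2.ind (fun a b h => ?_)
    exact ⟨⟨(e, a, b), h⟩, rfl⟩
  exact h (G.ends e) rfl

/-- A choice of orientation for each edge. -/
noncomputable def orient (e : G.E) : G.OEdge := Classical.choose (G.exists_oedge e)

lemma orient_edge (e : G.E) : (G.orient e).edge = e := Classical.choose_spec (G.exists_oedge e)

/-- The power dissipated by an edge current assignment: `Σ_{e ∈ Ed(Γ)} μ(e) I(e)²`. -/
noncomputable def power (μ : G.E → ℝ) (I : G.OEdge → ℝ) : ℝ :=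
  ∑ e : G.E, μ e * (I (G.orient e)) ^ 2

/-- The Green's function `g(Γ, μ; D, E) = Dᵀ v` for any `v` with `L v = E`
(for `Γ` connected, `μ` proper, and `D`, `E` zero-sum vectors, such a `v` exists and
`Dᵀ v` does not depend on the choice). -/
noncomputable def green (μ : G.E → ℝ) (D E : G.V → ℝ) : ℝ :=
  if h : ∃ v : G.V → ℝ, G.lap μ v = E then ∑ x : G.V, D x * Classical.choose h x else 0

/-- The contracted graph `Γ/S`: identify the two endpoints of each edge in `S` and
delete the edges in `S`. -/
noncomputable def contract (S : Set G.E) : Graph' :=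
  letI : DecidableEq (Quotient (Relation.EqvGen.setoid (G.Adj S))) := Classical.decEq _
  letI : DecidablePred (· ∈ S) := Classical.decPred _
  { V := Quotient (Relation.EqvGen.setoid (G.Adj S))
    E := {e : G.E // e ∉ S}
    ends := fun e => (G.ends e.1).map (Quotient.mk (Relation.EqvGen.setoid (G.Adj S))) }

/-- The quotient map `[·] : Vert(Γ) → Vert(Γ/S)`. -/
noncomputable def cmk (S : Set G.E) (x : G.V) : (G.contract S).V :=
  Quotient.mk (Relation.EqvGen.setoid (G.Adj S)) x

/-- The edge of `Γ` underlying an edge of `Γ/S` (recall `Ed(Γ/S) = Ed(Γ)∖S`). -/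
noncomputable def cval (S : Set G.E) (e : (G.contract S).E) : G.E := e.1

/-- The subset of `Ed(Γ/S) = Ed(Γ)∖S` induced by a subset `F ⊆ Ed(Γ)`, namely `F∖S`. -/
noncomputable def cset (S : Set G.E) (F : Set G.E) : Set (G.contract S).E :=
  {e : (G.contract S).E | G.cval S e ∈ F}

/-- The linear map `[·] : ℝ^{Vert(Γ)} → ℝ^{Vert(Γ/S)}` sending the basis vector `e_i`
to `e_{[i]}`. -/
noncomputable def pushVec (S : Set G.E) (D : G.V → ℝ) : (G.contract S).V → ℝ := fun x =>
  ∑ i ∈ Finset.univ.filter (fun i : G.V => G.cmk S i = x), D i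

/-- Contraction of walks: delete from a walk in `Γ` the edges belonging to `S`,
obtaining a walk in `Γ/S`. -/
noncomputable def contractWalk (S : Set G.E) :
    ∀ {i j : G.V}, G.Walk i j → (G.contract S).Walk (G.cmk S i) (G.cmk S j)
  | _, _, .nil a => .nil (G.cmk S a)
  | _, _, @Walk.cons _ a b _ e he w =>
    if hS : e ∈ S then
      (contractWalk S w).copy
        (Quotient.sound (Relation.EqvGen.rel b a ⟨e, hS, he.trans Sym2.eq_swap⟩)) rfl
    else
      Walk.cons (j := G.cmk S b) ⟨e, hS⟩
        (by show Sym2.map _ (G.ends e) = s(G.cmk S a, G.cmk S b)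
            rw [he]
            exact Sym2.map_pair_eq _ a b) (contractWalk S w)

/-- The current `I_{Γ|_T}(e : i → j)` flowing along the oriented edge `e : i → j` when a
unit current from `k` to `ℓ` is imposed on the spanning tree `Γ|_T`: it is `+1` if `e ∈ T`
and the unique path in `Γ|_T` from `k` to `ℓ` traverses `e` from `i` to `j`, `−1` if it
traverses `e` from `j` to `i`, and `0` otherwise. -/
noncomputable def treeCurrent (T : Set G.E) (k l : G.V) (e : G.E) (i j : G.V) : ℝ :=
  if e ∈ T ∧ ∃ w : G.Walk k l, w.IsPath ∧ w.In T ∧ (i, e, j) ∈ w.steps then 1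
  else if e ∈ T ∧ ∃ w : G.Walk k l, w.IsPath ∧ w.In T ∧ (j, e, i) ∈ w.steps then -1
  else 0

/-- The extended Green's function on possibly improper resistances: contract the edges of
zero resistance and take the Green's function of the resulting proper network, with the
pushed-forward vertex vectors. -/
noncomputable def egreen (μ : G.E → ℝ) (D E : G.V → ℝ) : ℝ :=
  (G.contract {e : G.E | μ e = 0}).green (fun e => μ (G.cval {e : G.E | μ e = 0} e))
    (G.pushVec {e : G.E | μ e = 0} D) (G.pushVec {e : G.E | μ e = 0} E)

end Graph'

/-! By Thomson's principle, `g(Γ, μ; D, D)` is the least power `Σₑ μ(e) I(e)²` of a current `I`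
consistent with `D`. This persists for improper `μ`: the minimiser is the Ohm current of the
potential of the contracted network `Γ/S`, pulled back to `Γ`, plus a current through the
zero-resistance edges `S`, which dissipates nothing. The power being linear and monotone in `μ`,
(ii) and the inequality of (iii) follow; in the equality case of (iii) the Ohm current of
`(Γ, μ')` dissipates the same power under `μ` and `μ'`, so it vanishes wherever `μ(e) < μ'(e)`.
Homogeneity (i) comes from `L_{aμ} (a v) = L_μ v`. -/

namespace Graph'

section Boundary

variable {ι W : Type*} [Fintype ι] [DecidableEq W]

/-- The boundary of the 1-chain `c` whose edge `i` runs from `a i` to `b i`. -/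
def boundary (a b : ι → W) (c : ι → ℝ) (x : W) : ℝ :=
  ∑ i, ((if a i = x then 1 else 0) - (if b i = x then 1 else 0)) * c i

lemma sum_mul_boundary [Fintype W] (u : W → ℝ) (a b : ι → W) (c : ι → ℝ) :
    ∑ x, u x * boundary a b c x = ∑ i, (u (a i) - u (b i)) * c i := by
  simp only [boundary, Finset.mul_sum]
  rw [Finset.sum_comm]
  refine Finset.sum_congr rfl fun i _ => ?_
  simp [sub_mul, mul_sub, Finset.sum_sub_distrib]

end Boundary

variable {G : Graph'}

lemma lap_eq_boundary {a b : G.E → G.V} (hab : ∀ e, G.ends e = s(a e, b e))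
    (μ : G.E → ℝ) (v : G.V → ℝ) :
    G.lap μ v = boundary a b (fun e => (v (a e) - v (b e)) / μ e) := by
  funext x
  rw [lap, boundary, Finset.sum_comm]
  refine Finset.sum_congr rfl fun e _ => ?_
  simp only [hab e, Sym2.eq_iff]
  by_cases ha : a e = x <;> by_cases hb : b e = x
  · subst ha; simp [hb]
  · subst ha; simp [hb, eq_comm]
  · subst hb; simp [ha, eq_comm]; ring
  · simp [ha, hb]

noncomputable def tail (e : G.E) : G.V := (G.orient e).src

noncomputable def head (e : G.E) : G.V := (G.orient e).tgt

lemma ends_eq_tail_head (e : G.E) : G.ends e = s(G.tail e, G.head e) := by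
  have h := (G.orient e).2
  rwa [show (G.orient e).1.1 = e from G.orient_edge e] at h

lemma eq_of_ends_eq {u : G.V → ℝ} {e : G.E} {i j : G.V} (h : G.ends e = s(i, j))
    (hu : u (G.tail e) = u (G.head e)) : u i = u j := by
  rw [ends_eq_tail_head] at h
  rcases Sym2.eq_iff.mp h with ⟨rfl, rfl⟩ | ⟨rfl, rfl⟩
  exacts [hu, hu.symm]

lemma OEdge.eq_orient_or_eq_rev (o : G.OEdge) :
    o = G.orient o.edge ∨ o = (G.orient o.edge).rev := by
  have h : s(o.src, o.tgt) = s(G.tail o.edge, G.head o.edge) :=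
    o.2.symm.trans (ends_eq_tail_head o.edge)
  have hedge : o.edge = (G.orient o.edge).edge := (G.orient_edge o.edge).symm
  rcases Sym2.eq_iff.mp h with ⟨hs, ht⟩ | ⟨hs, ht⟩
  · exact Or.inl (Subtype.ext (Prod.ext hedge (Prod.ext hs ht)))
  · exact Or.inr (Subtype.ext (Prod.ext hedge (Prod.ext hs ht)))

lemma IsCurrent.apply_eq_zero_of_src_eq_tgt {f : G.OEdge → ℝ} (hf : G.IsCurrent f)
    {o : G.OEdge} (ho : o.src = o.tgt) : f o = 0 := by
  have hrev : o.rev = o := Subtype.ext (Prod.ext rfl (Prod.ext ho.symm ho))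
  linarith [hrev ▸ hf o]

lemma sum_oedge_eq_sum_edge (g : G.OEdge → ℝ) (hg : ∀ o : G.OEdge, o.src = o.tgt → g o = 0) :
    ∑ o, g o = ∑ e, (g (G.orient e) + g (G.orient e).rev) := by
  rw [← Finset.sum_fiberwise Finset.univ OEdge.edge g]
  refine Finset.sum_congr rfl fun e _ => ?_
  have hfiber : Finset.univ.filter (fun o : G.OEdge => o.edge = e)
      = {G.orient e, (G.orient e).rev} := by
    ext o
    simp only [Finset.mem_filter, Finset.mem_univ, true_and, Finset.mem_insert,
      Finset.mem_singleton]
    constructor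
    · rintro rfl
      exact o.eq_orient_or_eq_rev
    · rintro (rfl | rfl) <;> exact G.orient_edge e
  rw [hfiber]
  by_cases hloop : G.tail e = G.head e
  · have hrev : (G.orient e).rev = G.orient e :=
      Subtype.ext (Prod.ext rfl (Prod.ext hloop.symm hloop))
    simp [hrev, hg _ hloop]
  · have hne : G.orient e ≠ (G.orient e).rev := fun h => hloop (congrArg OEdge.src h)
    exact Finset.sum_pair hne

lemma consistent_iff_boundary {f : G.OEdge → ℝ} (hf : G.IsCurrent f) (D : G.V → ℝ) :
    G.Consistent f D ↔ boundary G.tail G.head (fun e => f (G.orient e)) = D := by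
  rw [funext_iff]
  refine forall_congr' fun x => Eq.congr_left ?_
  rw [Finset.sum_filter,
    sum_oedge_eq_sum_edge _ fun o ho => by simp [hf.apply_eq_zero_of_src_eq_tgt ho], boundary]
  refine Finset.sum_congr rfl fun e _ => ?_
  rw [hf]
  show (if G.tail e = x then f (G.orient e) else 0)
      + (if G.head e = x then -f (G.orient e) else 0)
    = ((if G.tail e = x then 1 else 0) - (if G.head e = x then 1 else 0)) * f (G.orient e)
  split_ifs <;> ring

noncomputable def ohmCurrent (μ : G.E → ℝ) (v : G.V → ℝ) (o : G.OEdge) : ℝ :=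
  (v o.src - v o.tgt) / μ o.edge

lemma isCurrent_ohmCurrent (μ : G.E → ℝ) (v : G.V → ℝ) : G.IsCurrent (ohmCurrent μ v) :=
  fun o => by rw [ohmCurrent, ohmCurrent, ← neg_div, neg_sub]; rfl

lemma ohmCurrent_orient (μ : G.E → ℝ) (v : G.V → ℝ) (e : G.E) :
    ohmCurrent μ v (G.orient e) = (v (G.tail e) - v (G.head e)) / μ e := by
  rw [ohmCurrent, G.orient_edge]; rfl

lemma consistent_ohmCurrent (μ : G.E → ℝ) (v : G.V → ℝ) :
    G.Consistent (ohmCurrent μ v) (G.lap μ v) := by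
  rw [consistent_iff_boundary (isCurrent_ohmCurrent μ v), lap_eq_boundary ends_eq_tail_head]
  simp only [ohmCurrent_orient]

lemma IsCurrent.add {f g : G.OEdge → ℝ} (hf : G.IsCurrent f) (hg : G.IsCurrent g) :
    G.IsCurrent (f + g) := fun o => by simp [hf o, hg o, add_comm]

lemma Consistent.add {f g : G.OEdge → ℝ} {D D' : G.V → ℝ} (hf : G.Consistent f D)
    (hg : G.Consistent g D') : G.Consistent (f + g) (D + D') := fun x => by
  simp [Finset.sum_add_distrib, hf x, hg x]

lemma power_nonneg {μ : G.E → ℝ} (hμ : ∀ e, 0 ≤ μ e) (f : G.OEdge → ℝ) : 0 ≤ G.power μ f :=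
  Finset.sum_nonneg fun e _ => mul_nonneg (hμ e) (sq_nonneg _)

lemma power_mono {μ μ' : G.E → ℝ} (h : ∀ e, μ e ≤ μ' e) (f : G.OEdge → ℝ) :
    G.power μ f ≤ G.power μ' f :=
  Finset.sum_le_sum fun e _ => mul_le_mul_of_nonneg_right (h e) (sq_nonneg _)

lemma power_sum {ι : Type*} (s : Finset ι) (μ : ι → G.E → ℝ) (f : G.OEdge → ℝ) :
    G.power (fun e => ∑ k ∈ s, μ k e) f = ∑ k ∈ s, G.power (μ k) f := by
  simp only [power, Finset.sum_mul]
  exact Finset.sum_comm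

lemma eq_or_eq_zero_of_power_eq {μ μ' : G.E → ℝ} (h : ∀ e, μ e ≤ μ' e) {f : G.OEdge → ℝ}
    (hpow : G.power μ f = G.power μ' f) (e : G.E) : μ e = μ' e ∨ f (G.orient e) = 0 := by
  have hsum : ∑ e, (μ' e - μ e) * f (G.orient e) ^ 2 = 0 := by
    simp only [sub_mul, Finset.sum_sub_distrib]
    exact sub_eq_zero.2 hpow.symm
  have hterm := (Finset.sum_eq_zero_iff_of_nonneg fun e _ =>
    mul_nonneg (sub_nonneg.2 (h e)) (sq_nonneg _)).1 hsum e (Finset.mem_univ e)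
  rcases mul_eq_zero.1 hterm with h' | h'
  · exact Or.inl (sub_eq_zero.1 h').symm
  · exact Or.inr (pow_eq_zero_iff two_ne_zero |>.1 h')

/-- Thomson's principle. -/
theorem power_eq_add_power_sub {μ : G.E → ℝ} {v D : G.V → ℝ} {f : G.OEdge → ℝ}
    (hv : ∀ e, μ e = 0 → v (G.tail e) = v (G.head e)) (hf : G.IsCurrent f)
    (hfD : G.Consistent f D) (hvD : ∑ x, v x * G.lap μ v x = ∑ x, v x * D x) :
    G.power μ f = ∑ x, D x * v x + G.power μ (f - ohmCurrent μ v) := by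
  have hohm : ∀ e, μ e * ohmCurrent μ v (G.orient e) = v (G.tail e) - v (G.head e) := by
    intro e
    rw [ohmCurrent_orient]
    by_cases h : μ e = 0
    · simp [h, hv e h]
    · exact mul_div_cancel₀ _ h
  have hflux : ∑ x, v x * D x = ∑ e, (v (G.tail e) - v (G.head e)) * f (G.orient e) := by
    rw [← (consistent_iff_boundary hf D).1 hfD, sum_mul_boundary]
  have henergy : ∑ x, v x * G.lap μ v x
      = ∑ e, (v (G.tail e) - v (G.head e)) * ohmCurrent μ v (G.orient e) := by
    rw [lap_eq_boundary ends_eq_tail_head, sum_mul_boundary]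
    simp only [ohmCurrent_orient]
  have hterm : ∀ e, μ e * (f - ohmCurrent μ v) (G.orient e) ^ 2
      = μ e * f (G.orient e) ^ 2 - 2 * ((v (G.tail e) - v (G.head e)) * f (G.orient e))
        + (v (G.tail e) - v (G.head e)) * ohmCurrent μ v (G.orient e) := fun e => by
    rw [Pi.sub_apply]
    linear_combination (ohmCurrent μ v (G.orient e) - 2 * f (G.orient e)) * hohm e
  simp only [power, hterm, Finset.sum_add_distrib, Finset.sum_sub_distrib, ← Finset.mul_sum,
    ← hflux, ← henergy, hvD, mul_comm (D _)]
  ring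

lemma sum_mul_le_power {μ : G.E → ℝ} (hμ : ∀ e, 0 ≤ μ e) {v D : G.V → ℝ} {f : G.OEdge → ℝ}
    (hv : ∀ e, μ e = 0 → v (G.tail e) = v (G.head e)) (hf : G.IsCurrent f)
    (hfD : G.Consistent f D) (hvD : ∑ x, v x * G.lap μ v x = ∑ x, v x * D x) :
    ∑ x, D x * v x ≤ G.power μ f := by
  rw [power_eq_add_power_sub hv hf hfD hvD]
  linarith [power_nonneg hμ (f - ohmCurrent μ v)]

lemma power_ohmCurrent {μ : G.E → ℝ} (hμ : ∀ e, μ e ≠ 0) {v D : G.V → ℝ}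
    (hv : G.lap μ v = D) : G.power μ (ohmCurrent μ v) = ∑ x, D x * v x := by
  rw [power_eq_add_power_sub (fun e h => absurd h (hμ e)) (isCurrent_ohmCurrent μ v)
    (hv ▸ consistent_ohmCurrent μ v) (by rw [hv])]
  simp [power]

section Contraction

variable {S : Set G.E}

lemma cmk_eq_cmk_iff {x y : G.V} : G.cmk S x = G.cmk S y ↔ G.Reach S x y := Quotient.eq

lemma cmk_surjective : Function.Surjective (G.cmk S) := Quotient.mk_surjective

lemma cmk_tail_eq_cmk_head {e : G.E} (he : e ∈ S) :
    G.cmk S (G.tail e) = G.cmk S (G.head e) :=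
  cmk_eq_cmk_iff.2 (Relation.EqvGen.rel _ _ ⟨e, he, ends_eq_tail_head e⟩)

lemma contract_ends (e : (G.contract S).E) :
    (G.contract S).ends e
      = s(G.cmk S (G.tail (G.cval S e)), G.cmk S (G.head (G.cval S e))) := by
  show Sym2.map _ (G.ends e.1) = _
  rw [ends_eq_tail_head, Sym2.map_mk]
  rfl

lemma Connected.contract (hG : G.Connected) : (G.contract S).Connected := by
  intro X Y
  obtain ⟨x, rfl⟩ := cmk_surjective X
  obtain ⟨y, rfl⟩ := cmk_surjective (S := S) Y
  induction hG x y with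
  | rel i j hij =>
    obtain ⟨e, -, he⟩ := hij
    by_cases hS : e ∈ S
    · rw [cmk_eq_cmk_iff.2 (Relation.EqvGen.rel _ _ ⟨e, hS, he⟩)]
      exact Relation.EqvGen.refl _
    · refine Relation.EqvGen.rel _ _ ⟨⟨e, hS⟩, trivial, ?_⟩
      show Sym2.map _ (G.ends e) = _
      rw [he, Sym2.map_mk]
      rfl
  | refl => exact Relation.EqvGen.refl _
  | symm _ _ _ ih => exact Relation.EqvGen.symm _ _ ih
  | trans _ _ _ _ _ ih₁ ih₂ => exact Relation.EqvGen.trans _ _ _ ih₁ ih₂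

lemma sum_contract_edges (F : G.E → ℝ) (hF : ∀ e ∈ S, F e = 0) :
    ∑ e : (G.contract S).E, F (G.cval S e) = ∑ e, F e :=
  calc ∑ e : (G.contract S).E, F (G.cval S e)
      = ∑ e ∈ Finset.univ.filter (· ∉ S), F e :=
        (Finset.sum_subtype _ (fun e => by simp) F).symm
    _ = ∑ e, F e := Finset.sum_filter_of_ne fun e _ h he => h (hF e he)

lemma sum_mul_pushVec (w : (G.contract S).V → ℝ) (F : G.V → ℝ) :
    ∑ X, w X * G.pushVec S F X = ∑ x, w (G.cmk S x) * F x := by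
  simp only [pushVec, Finset.mul_sum]
  rw [← Finset.sum_fiberwise Finset.univ (G.cmk S)]
  refine Finset.sum_congr rfl fun X _ => Finset.sum_congr rfl fun x hx => ?_
  rw [(Finset.mem_filter.1 hx).2]

lemma sum_pushVec (F : G.V → ℝ) : ∑ X, G.pushVec S F X = ∑ x, F x := by
  simpa using sum_mul_pushVec (S := S) 1 F

lemma pushVec_eq_sum_of_connOn (hS : G.ConnOn S) (F : G.V → ℝ) (X : (G.contract S).V) :
    G.pushVec S F X = ∑ x, F x := by
  obtain ⟨y, rfl⟩ := cmk_surjective X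
  rw [pushVec, Finset.filter_true_of_mem fun x _ => cmk_eq_cmk_iff.2 (hS x y)]

lemma pushVec_boundary {ι : Type*} [Fintype ι] (a b : ι → G.V) (c : ι → ℝ) :
    G.pushVec S (boundary a b c) = boundary (G.cmk S ∘ a) (G.cmk S ∘ b) c := by
  funext X
  have h := sum_mul_boundary (fun x => if G.cmk S x = X then 1 else 0) a b c
  simp only [ite_mul, one_mul, zero_mul, Finset.sum_ite, Finset.sum_const_zero, add_zero] at h
  rw [pushVec, h, boundary]
  rfl

lemma lap_contract (μ : G.E → ℝ) (w : (G.contract S).V → ℝ) :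
    (G.contract S).lap (fun e => μ (G.cval S e)) w
      = G.pushVec S (G.lap μ (w ∘ G.cmk S)) := by
  rw [lap_eq_boundary contract_ends, lap_eq_boundary ends_eq_tail_head, pushVec_boundary]
  funext X
  exact sum_contract_edges (fun e => ((if G.cmk S (G.tail e) = X then 1 else 0)
    - (if G.cmk S (G.head e) = X then 1 else 0))
      * ((w (G.cmk S (G.tail e)) - w (G.cmk S (G.head e))) / μ e))
    fun e he => by simp [cmk_tail_eq_cmk_head he]

end Contraction

noncomputable def lapₗ (μ : G.E → ℝ) : (G.V → ℝ) →ₗ[ℝ] (G.V → ℝ) where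
  toFun := G.lap μ
  map_add' v w := by
    simp only [lap_eq_boundary ends_eq_tail_head]
    funext x
    simp only [boundary, Pi.add_apply, ← Finset.sum_add_distrib]
    exact Finset.sum_congr rfl fun e _ => by ring
  map_smul' c v := by
    simp only [lap_eq_boundary ends_eq_tail_head]
    funext x
    simp only [boundary, Pi.smul_apply, smul_eq_mul, Finset.mul_sum, RingHom.id_apply]
    exact Finset.sum_congr rfl fun e _ => by ring

lemma lap_sub (μ : G.E → ℝ) (u v : G.V → ℝ) : G.lap μ (u - v) = G.lap μ u - G.lap μ v :=
  map_sub (G.lapₗ μ) u v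

noncomputable def pushVecₗ (S : Set G.E) : (G.V → ℝ) →ₗ[ℝ] ((G.contract S).V → ℝ) where
  toFun := G.pushVec S
  map_add' _ _ := funext fun _ => Finset.sum_add_distrib
  map_smul' _ _ := funext fun _ => (Finset.mul_sum _ _ _).symm

lemma pushVec_sub (S : Set G.E) (F F' : G.V → ℝ) :
    G.pushVec S (F - F') = G.pushVec S F - G.pushVec S F' :=
  map_sub (G.pushVecₗ S) F F'

lemma pushVecₗ_surjective (S : Set G.E) : Function.Surjective (G.pushVecₗ S) := by
  intro y
  refine ⟨fun x => if x = (G.cmk S x).out then y (G.cmk S x) else 0, funext fun X => ?_⟩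
  show ∑ x ∈ Finset.univ.filter (G.cmk S · = X), _ = y X
  rw [Finset.sum_congr rfl fun x hx => by rw [(Finset.mem_filter.1 hx).2],
    Finset.sum_ite_eq']
  have hX : G.cmk S X.out = X := Quotient.out_eq X
  simp [hX]

lemma tail_eq_head_of_lap_eq_zero {μ : G.E → ℝ} (hμ : ∀ e, 0 ≤ μ e) {u : G.V → ℝ}
    (hu : G.lap μ u = 0) {e : G.E} (he : μ e ≠ 0) : u (G.tail e) = u (G.head e) := by
  have hsum :
      ∑ e, (u (G.tail e) - u (G.head e)) * ((u (G.tail e) - u (G.head e)) / μ e) = 0 := by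
    rw [← sum_mul_boundary, ← lap_eq_boundary ends_eq_tail_head, hu]
    simp
  have hterm := (Finset.sum_eq_zero_iff_of_nonneg fun e _ => by
    rw [mul_div_assoc']
    exact div_nonneg (mul_self_nonneg _) (hμ e)).1 hsum e (Finset.mem_univ e)
  rcases mul_eq_zero.1 hterm with h | h
  · exact sub_eq_zero.1 h
  · exact sub_eq_zero.1 ((div_eq_zero_iff.1 h).resolve_right he)

lemma eq_of_reach_of_lap_eq_zero {μ : G.E → ℝ} (hμ : ∀ e, 0 ≤ μ e) {u : G.V → ℝ}
    (hu : G.lap μ u = 0) {x y : G.V} (h : G.Reach {e | μ e ≠ 0} x y) : u x = u y := by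
  induction h with
  | rel i j hij =>
    obtain ⟨e, he, hij⟩ := hij
    exact eq_of_ends_eq hij (tail_eq_head_of_lap_eq_zero hμ hu he)
  | refl => rfl
  | symm _ _ _ ih => exact ih.symm
  | trans _ _ _ _ _ ih₁ ih₂ => exact ih₁.trans ih₂

/-- Since `x / 0 = 0`, the Laplacian `G.lap μ` only sees the edges with `μ e ≠ 0`; its range
consists of the vectors summing to zero on every connected component of those edges. -/
theorem exists_lap_eq_of_pushVec_eq_zero {μ : G.E → ℝ} (hμ : ∀ e, 0 ≤ μ e) {R : G.V → ℝ}
    (hR : G.pushVec {e | μ e ≠ 0} R = 0) : ∃ v, G.lap μ v = R := by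
  set P : Set G.E := {e | μ e ≠ 0}
  have hker :
      LinearMap.ker (G.lapₗ μ) ≤ LinearMap.range (LinearMap.funLeft ℝ ℝ (G.cmk P)) := by
    intro u hu
    refine ⟨fun X => u X.out, funext fun x => ?_⟩
    exact eq_of_reach_of_lap_eq_zero hμ hu (cmk_eq_cmk_iff.1 (Quotient.out_eq (G.cmk P x)))
  have hrange : LinearMap.range (G.lapₗ μ) ≤ LinearMap.ker (G.pushVecₗ P) := by
    rintro _ ⟨v, rfl⟩
    show G.pushVec P (G.lap μ v) = 0
    rw [lap_eq_boundary ends_eq_tail_head, pushVec_boundary]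
    funext X
    refine Finset.sum_eq_zero fun e _ => ?_
    by_cases he : μ e = 0
    · simp [he]
    · simp [cmk_tail_eq_cmk_head (S := P) he]
  have hlap := (G.lapₗ μ).finrank_range_add_finrank_ker
  have hpush := (G.pushVecₗ P).finrank_range_add_finrank_ker
  rw [LinearMap.range_eq_top.2 (pushVecₗ_surjective P), finrank_top] at hpush
  have hkerle := (Submodule.finrank_mono hker).trans (LinearMap.finrank_range_le _)
  obtain ⟨v, hv⟩ : R ∈ LinearMap.range (G.lapₗ μ) :=
    (Submodule.eq_of_le_of_finrank_le hrange (by omega)) ▸ hR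
  exact ⟨v, hv⟩

lemma Connected.connOn_ne_zero (hG : G.Connected) {μ : G.E → ℝ} (hμ : ∀ e, μ e ≠ 0) :
    G.ConnOn {e | μ e ≠ 0} := by
  rwa [Set.eq_univ_of_forall hμ]

lemma Connected.exists_lap_eq (hG : G.Connected) {μ : G.E → ℝ} (hμ : ∀ e, 0 < μ e)
    {R : G.V → ℝ} (hR : ∑ x, R x = 0) : ∃ v, G.lap μ v = R := by
  refine exists_lap_eq_of_pushVec_eq_zero (fun e => (hμ e).le) (funext fun X => ?_)
  rw [Pi.zero_apply, pushVec_eq_sum_of_connOn (hG.connOn_ne_zero fun e => (hμ e).ne'), hR]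

lemma Connected.green_eq_sum (hG : G.Connected) {μ : G.E → ℝ} (hμ : ∀ e, 0 < μ e)
    {D E v : G.V → ℝ} (hD : ∑ x, D x = 0) (hv : G.lap μ v = E) :
    G.green μ D E = ∑ x, D x * v x := by
  have h : ∃ u, G.lap μ u = E := ⟨v, hv⟩
  rw [green, dif_pos h]
  set u := Classical.choose h
  have hdiff : G.lap μ (u - v) = 0 := by rw [lap_sub, Classical.choose_spec h, hv, sub_self]
  rcases isEmpty_or_nonempty G.V with hV | ⟨⟨x₀⟩⟩
  · simp [Finset.univ_eq_empty]
  have hconst : ∀ x, (u - v) x = (u - v) x₀ := fun x =>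
    eq_of_reach_of_lap_eq_zero (fun e => (hμ e).le) hdiff
      (hG.connOn_ne_zero (fun e => (hμ e).ne') x x₀)
  have hzero : ∑ x, D x * (u - v) x = 0 := by
    simp_rw [hconst, ← Finset.sum_mul, hD, zero_mul]
  simp only [Pi.sub_apply, mul_sub, Finset.sum_sub_distrib] at hzero
  linarith

lemma Connected.green_smul (hG : G.Connected) {μ : G.E → ℝ} (hμ : ∀ e, 0 < μ e) {a : ℝ}
    (ha : 0 < a) {D E : G.V → ℝ} (hD : ∑ x, D x = 0) (hE : ∑ x, E x = 0) :
    G.green (fun e => a * μ e) D E = a * G.green μ D E := by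
  obtain ⟨v, hv⟩ := hG.exists_lap_eq hμ hE
  have hav : G.lap (fun e => a * μ e) (a • v) = E := by
    rw [← hv]
    funext x
    simp only [lap, Pi.smul_apply, smul_eq_mul, ← mul_sub, mul_div_mul_left _ _ ha.ne']
  rw [hG.green_eq_sum (fun e => mul_pos ha (hμ e)) hD hav, hG.green_eq_sum hμ hD hv,
    Finset.mul_sum]
  simp only [Pi.smul_apply, smul_eq_mul]
  exact Finset.sum_congr rfl fun x _ => by ring

lemma green_zero_left (μ : G.E → ℝ) (E : G.V → ℝ) : G.green μ 0 E = 0 := by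
  unfold green
  split_ifs <;> simp

section ExtendedGreen

variable {μ : G.E → ℝ} {D : G.V → ℝ}

lemma contract_resistance_pos (hμ : ∀ e, 0 ≤ μ e) (e : (G.contract {e | μ e = 0}).E) :
    0 < μ (G.cval {e | μ e = 0} e) :=
  (hμ _).lt_of_ne (Ne.symm e.2)

lemma Connected.exists_potential_egreen (hG : G.Connected) (hμ : ∀ e, 0 ≤ μ e)
    (hD : ∑ x, D x = 0) :
    ∃ v : G.V → ℝ, (∀ e, μ e = 0 → v (G.tail e) = v (G.head e)) ∧
      G.pushVec {e | μ e = 0} (G.lap μ v) = G.pushVec {e | μ e = 0} D ∧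
      ∑ x, v x * G.lap μ v x = ∑ x, v x * D x ∧
      G.egreen μ D D = ∑ x, D x * v x := by
  set S : Set G.E := {e | μ e = 0}
  have hD' : ∑ X, G.pushVec S D X = 0 := by rw [sum_pushVec, hD]
  obtain ⟨w, hw⟩ := hG.contract.exists_lap_eq (contract_resistance_pos hμ) hD'
  have hpush : G.pushVec S (G.lap μ (w ∘ G.cmk S)) = G.pushVec S D := by
    rw [← lap_contract, hw]
  refine ⟨w ∘ G.cmk S, fun e he => congrArg w (cmk_tail_eq_cmk_head he), hpush, ?_, ?_⟩
  · simp only [Function.comp_apply]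
    rw [← sum_mul_pushVec, ← sum_mul_pushVec, hpush]
  · rw [egreen, hG.contract.green_eq_sum (contract_resistance_pos hμ) hD' hw]
    simp only [mul_comm (G.pushVec S D _), mul_comm (D _), Function.comp_apply]
    exact sum_mul_pushVec w D

lemma Connected.egreen_le_power (hG : G.Connected) (hμ : ∀ e, 0 ≤ μ e) (hD : ∑ x, D x = 0)
    {f : G.OEdge → ℝ} (hf : G.IsCurrent f) (hfD : G.Consistent f D) :
    G.egreen μ D D ≤ G.power μ f := by
  obtain ⟨v, hv, -, hvD, hg⟩ := hG.exists_potential_egreen hμ hD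
  rw [hg]
  exact sum_mul_le_power hμ hv hf hfD hvD

lemma Connected.exists_current_power_eq_egreen (hG : G.Connected) (hμ : ∀ e, 0 ≤ μ e)
    (hD : ∑ x, D x = 0) :
    ∃ f, G.IsCurrent f ∧ G.Consistent f D ∧ G.power μ f = G.egreen μ D D := by
  obtain ⟨v, hv, hpush, hvD, hg⟩ := hG.exists_potential_egreen hμ hD
  -- The Ohm current of `v` is completed by a current through the zero-resistance edges alone,
  -- namely an Ohm current of the network where exactly these edges have resistance `1`.
  set μ₀ : G.E → ℝ := fun e => if μ e = 0 then 1 else 0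
  have hμ₀ : {e | μ₀ e ≠ 0} = {e | μ e = 0} := by ext e; simp [μ₀]
  obtain ⟨u, hu⟩ := exists_lap_eq_of_pushVec_eq_zero (μ := μ₀) (R := D - G.lap μ v)
    (fun e => by positivity) (by rw [hμ₀, pushVec_sub, hpush, sub_self])
  have hf := (isCurrent_ohmCurrent μ v).add (isCurrent_ohmCurrent μ₀ u)
  have hfD : G.Consistent (ohmCurrent μ v + ohmCurrent μ₀ u) D := by
    simpa [hu] using (consistent_ohmCurrent μ v).add (consistent_ohmCurrent μ₀ u)
  refine ⟨_, hf, hfD, ?_⟩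
  rw [power_eq_add_power_sub hv hf hfD hvD, hg, add_sub_cancel_left, add_eq_left]
  refine Finset.sum_eq_zero fun e _ => ?_
  by_cases he : μ e = 0
  · simp [he]
  · simp [ohmCurrent_orient, μ₀, he]

lemma Connected.egreen_eq_power_ohmCurrent (hG : G.Connected) (hμ : ∀ e, 0 < μ e)
    (hD : ∑ x, D x = 0) {v : G.V → ℝ} (hv : G.lap μ v = D) :
    G.egreen μ D D = G.power μ (ohmCurrent μ v) := by
  refine le_antisymm (hG.egreen_le_power (fun e => (hμ e).le) hD (isCurrent_ohmCurrent μ v)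
    (hv ▸ consistent_ohmCurrent μ v)) ?_
  obtain ⟨f, hf, hfD, hpow⟩ := hG.exists_current_power_eq_egreen (fun e => (hμ e).le) hD
  rw [power_ohmCurrent (fun e => (hμ e).ne') hv, ← hpow]
  exact sum_mul_le_power (fun e => (hμ e).le) (fun e h => absurd h (hμ e).ne') hf hfD
    (by rw [hv])

lemma Connected.egreen_smul (hG : G.Connected) (hμ : ∀ e, 0 ≤ μ e) {a : ℝ} (ha : 0 ≤ a)
    (hD : ∑ x, D x = 0) {E : G.V → ℝ} (hE : ∑ x, E x = 0) :
    G.egreen (fun e => a * μ e) D E = a * G.egreen μ D E := by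
  rcases ha.eq_or_lt with rfl | ha
  · have hS : G.ConnOn {e | 0 * μ e = 0} := by
      rw [show {e | 0 * μ e = 0} = Set.univ by ext; simp]
      exact hG
    have hpush : G.pushVec {e | 0 * μ e = 0} D = 0 :=
      funext fun X => by rw [pushVec_eq_sum_of_connOn hS, hD, Pi.zero_apply]
    rw [zero_mul, egreen, hpush, green_zero_left]
  · have hS : {e | a * μ e = 0} = {e | μ e = 0} := by ext e; simp [ha.ne']
    unfold egreen
    rw [hS]
    exact hG.contract.green_smul (contract_resistance_pos hμ) ha
      (by rw [sum_pushVec, hD]) (by rw [sum_pushVec, hE])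

end ExtendedGreen

end Graph'

theorem stmt17 (G : Graph') (hG : G.Connected) (D E : G.V → ℝ)
    (hD : ∑ x : G.V, D x = 0) (hE : ∑ x : G.V, E x = 0) :
    (∀ a : ℝ, 0 ≤ a → ∀ μ : G.E → ℝ, (∀ e : G.E, 0 ≤ μ e) →
      G.egreen (fun e => a * μ e) D E = a * G.egreen μ D E) ∧
    (∀ (n : ℕ) (μ : Fin n → G.E → ℝ), (∀ (k : Fin n) (e : G.E), 0 ≤ μ k e) →
      ∑ k : Fin n, G.egreen (μ k) D D ≤ G.egreen (fun e => ∑ k : Fin n, μ k e) D D) ∧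
    (∀ μ μ' : G.E → ℝ, (∀ e : G.E, 0 ≤ μ e) → (∀ e : G.E, 0 ≤ μ' e) →
      (∀ e : G.E, μ e ≤ μ' e) →
      G.egreen μ D D ≤ G.egreen μ' D D ∧
      (G.egreen μ D D = G.egreen μ' D D → (∀ e : G.E, 0 < μ' e) →
        ∀ v' : G.V → ℝ, G.lap μ' v' = D →
          ∀ (e : G.E) (i j : G.V), G.ends e = s(i, j) → μ e = μ' e ∨ v' i = v' j)) := by
  refine ⟨fun a ha μ hμ => hG.egreen_smul hμ ha hD hE, fun n μ hμ => ?_,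
    fun μ μ' hμ hμ' hle => ⟨?_, fun heq hpos v' hv' e i j hij => ?_⟩⟩
  · obtain ⟨f, hf, hfD, hpow⟩ :=
      hG.exists_current_power_eq_egreen (fun e => Finset.sum_nonneg fun k _ => hμ k e) hD
    calc ∑ k, G.egreen (μ k) D D ≤ ∑ k, G.power (μ k) f :=
          Finset.sum_le_sum fun k _ => hG.egreen_le_power (hμ k) hD hf hfD
      _ = G.egreen (fun e => ∑ k, μ k e) D D := by rw [← hpow, Graph'.power_sum]
  · obtain ⟨f, hf, hfD, hpow⟩ := hG.exists_current_power_eq_egreen hμ' hD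
    exact hpow ▸ (hG.egreen_le_power hμ hD hf hfD).trans (Graph'.power_mono hle f)
  · have hpowI : G.power μ (G.ohmCurrent μ' v') = G.power μ' (G.ohmCurrent μ' v') :=
      le_antisymm (Graph'.power_mono hle _) (hG.egreen_eq_power_ohmCurrent hpos hD hv' ▸
        heq ▸ hG.egreen_le_power hμ hD (Graph'.isCurrent_ohmCurrent μ' v')
          (hv' ▸ Graph'.consistent_ohmCurrent μ' v'))
    refine (Graph'.eq_or_eq_zero_of_power_eq hle hpowI e).imp_right fun h => ?_
    rw [Graph'.ohmCurrent_orient, div_eq_zero_iff, sub_eq_zero] at h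
    exact Graph'.eq_of_ends_eq hij (h.resolve_right (hpos e).ne')
end
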